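/- Suppose ν = 1, i.e. ∇f is L₁-Lipschitz: ‖∇f(y) − ∇f(x)‖ ≤ L₁‖y − x‖ for all x, y. Then for every μ > 0 the gradient of the Gaussian smoothing is L₁-Lipschitz as well: ‖∇f_μ(y) − ∇f_μ(x)‖ ≤ L₁‖y − x‖ for all x, y ∈ ℝⁿ. -/

import Mathlib

open MeasureTheory Real
open scoped RealInnerProductSpace

noncomputable def kappa (n : ℕ) : ℝ := (2 * Real.pi) ^ ((n : ℝ) / 2)

/-- Gaussian smoothing `f_μ` of `f`. -/
noncomputable def gsmooth {n : ℕ} (f : EuclideanSpace ℝ (Fin n) → ℝ) (μ : ℝ)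
    (x : EuclideanSpace ℝ (Fin n)) : ℝ :=
  (kappa n)⁻¹ * ∫ u : EuclideanSpace ℝ (Fin n), f (x + μ • u) * Real.exp (-‖u‖ ^ 2 / 2)

/-- The gradient of the Gaussian smoothing, written via finite differences:
`∇f_μ(x) = κ⁻¹ ∫ ((f(x+μu) - f(x))/μ) u e^{-‖u‖²/2} du`. Applied to an inexact
oracle `f̃` it gives the smoothed inexact gradient `∇f̃_μ(x, δ)`. -/
noncomputable def gsmoothGrad {n : ℕ} (f : EuclideanSpace ℝ (Fin n) → ℝ) (μ : ℝ)
    (x : EuclideanSpace ℝ (Fin n)) : EuclideanSpace ℝ (Fin n) :=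
  (kappa n)⁻¹ • ∫ u : EuclideanSpace ℝ (Fin n),
    (((f (x + μ • u) - f x) / μ) * Real.exp (-‖u‖ ^ 2 / 2)) • u

/-! Gaussian integration by parts (Stein's identity
`∫ φ(u) u e^{-‖u‖²/2} du = ∫ ∇φ(u) e^{-‖u‖²/2} du`, applied to `φ(u) = f(x + μu) - f(x)`)
turns the finite-difference formula into `∇f_μ(x) = κ⁻¹ ∫ e^{-‖u‖²/2} ∇f(x + μu) du`.
This is an average of translates of `∇f` against a weight of total mass `κ`, so it inherits
the Lipschitz constant of `∇f`. All the integrals converge because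
`t^k e^{-t²/2} ≤ k! e^{1 - t²/4}`. -/

open scoped Nat NNReal

section GaussianMoments

variable {E : Type*} [NormedAddCommGroup E] [InnerProductSpace ℝ E] [FiniteDimensional ℝ E]
  [MeasurableSpace E] [BorelSpace E]

theorem pow_mul_exp_neg_sq_div_two_le (k : ℕ) {t : ℝ} (ht : 0 ≤ t) :
    t ^ k * exp (-t ^ 2 / 2) ≤ k ! * exp (1 - t ^ 2 / 4) := by
  have hpow : t ^ k ≤ k ! * exp t := by
    have := Real.pow_div_factorial_le_exp t ht k
    rwa [div_le_iff₀ (by positivity), mul_comm] at this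
  calc t ^ k * exp (-t ^ 2 / 2) ≤ k ! * exp t * exp (-t ^ 2 / 2) := by gcongr
    _ = k ! * exp (t - t ^ 2 / 2) := by rw [mul_assoc, ← exp_add]; ring_nf
    _ ≤ k ! * exp (1 - t ^ 2 / 4) := by
        gcongr k ! * ?_
        exact exp_le_exp.mpr (by nlinarith [sq_nonneg (t / 2 - 1)])

theorem integral_exp_neg_sq_norm_div_two :
    ∫ u : E, exp (-‖u‖ ^ 2 / 2) = (2 * π) ^ (Module.finrank ℝ E / 2 : ℝ) := by
  have := GaussianFourier.integral_rexp_neg_mul_sq_norm (V := E) (b := 1 / 2) (by norm_num)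
  convert this using 3 <;> ring_nf

theorem integrable_exp_neg_sq_norm_div_two : Integrable fun u : E => exp (-‖u‖ ^ 2 / 2) :=
  .of_integral_ne_zero <| by rw [integral_exp_neg_sq_norm_div_two]; positivity

theorem integrable_exp_neg_mul_sq_norm {b : ℝ} (hb : 0 < b) :
    Integrable fun u : E => exp (-b * ‖u‖ ^ 2) :=
  .of_integral_ne_zero <| by rw [GaussianFourier.integral_rexp_neg_mul_sq_norm hb]; positivity

theorem integrable_norm_pow_mul_exp_neg_sq_div_two (k : ℕ) :
    Integrable fun u : E => ‖u‖ ^ k * exp (-‖u‖ ^ 2 / 2) := by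
  refine ((integrable_exp_neg_mul_sq_norm (E := E) (b := 1 / 4) (by norm_num)).const_mul
    (k ! * exp 1)).mono' (by fun_prop) (.of_forall fun u => ?_)
  rw [norm_of_nonneg (by positivity), mul_assoc, ← exp_add]
  convert pow_mul_exp_neg_sq_div_two_le k (norm_nonneg u) using 3
  ring

theorem integrable_of_norm_le_affine_mul_gaussian {F : Type*} [NormedAddCommGroup F]
    {g : E → F} (hg : AEStronglyMeasurable g) (a b : ℝ) (k : ℕ)
    (hle : ∀ u, ‖g u‖ ≤ (a + b * ‖u‖) * ‖u‖ ^ k * exp (-‖u‖ ^ 2 / 2)) :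
    Integrable g := by
  refine (((integrable_norm_pow_mul_exp_neg_sq_div_two k).const_mul a).add
    ((integrable_norm_pow_mul_exp_neg_sq_div_two (k + 1)).const_mul b)).mono' hg
    (.of_forall fun u => (hle u).trans_eq ?_)
  simp only [Pi.add_apply]
  ring

end GaussianMoments

section GaussianIntegrationByParts

variable {E : Type*} [NormedAddCommGroup E] [InnerProductSpace ℝ E]

theorem hasFDerivAt_exp_neg_sq_norm_div_two (u : E) :
    HasFDerivAt (fun v : E => exp (-‖v‖ ^ 2 / 2)) (-exp (-‖u‖ ^ 2 / 2) • innerSL ℝ u) u := by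
  have := (HasFDerivAt.const_mul (hasStrictFDerivAt_norm_sq u).hasFDerivAt (-2⁻¹ : ℝ)).exp
  convert this using 1
  · ext v; ring_nf
  ext v
  simp only [smul_apply, add_apply, innerSL_apply_apply, smul_eq_mul, two_smul]
  ring_nf

variable [FiniteDimensional ℝ E] [MeasurableSpace E] [BorelSpace E]

theorem integral_mul_exp_neg_sq_norm_div_two_smul {f : E → ℝ} {f' : E → E}
    (hf : ∀ u, HasGradientAt f (f' u) u)
    (hfu : Integrable fun u => (f u * exp (-‖u‖ ^ 2 / 2)) • u)
    (hf' : Integrable fun u => exp (-‖u‖ ^ 2 / 2) • f' u)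
    (hfg : Integrable fun u => f u * exp (-‖u‖ ^ 2 / 2)) :
    ∫ u, (f u * exp (-‖u‖ ^ 2 / 2)) • u = ∫ u, exp (-‖u‖ ^ 2 / 2) • f' u := by
  refine ext_inner_left ℝ fun v => ?_
  rw [← integral_inner hfu, ← integral_inner hf']
  have hibp := integral_bilinear_hasFDerivAt_right_eq_neg_left_of_integrable (μ := volume) (v := v)
    (B := ContinuousLinearMap.mul ℝ ℝ) (f := f) (g := fun u : E => exp (-‖u‖ ^ 2 / 2))
    (f' := fun u => InnerProductSpace.toDual ℝ E (f' u))
    (g' := fun u => -exp (-‖u‖ ^ 2 / 2) • innerSL ℝ u)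
    ((hf'.inner_const v).congr (.of_forall fun u => by simp [inner_smul_left, mul_comm]))
    ((hfu.inner_const v).neg.congr (.of_forall fun u => by simp [real_inner_smul_left, mul_assoc]))
    hfg (fun u _ => (hf u).hasFDerivAt) (fun u _ => hasFDerivAt_exp_neg_sq_norm_div_two u)
  simp only [ContinuousLinearMap.mul_apply', smul_apply, innerSL_apply_apply, smul_eq_mul,
    InnerProductSpace.toDual_apply_apply, mul_neg, neg_mul, integral_neg, neg_inj] at hibp
  simpa only [real_inner_comm _ v, real_inner_smul_left, mul_assoc, mul_comm (exp _)] using hibp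

end GaussianIntegrationByParts

section LipschitzGradient

variable {E : Type*} [NormedAddCommGroup E] [InnerProductSpace ℝ E] [CompleteSpace E]
  {f : E → ℝ} {K : ℝ≥0}

theorem abs_sub_le_of_lipschitzWith_gradient (hf : Differentiable ℝ f)
    (hK : LipschitzWith K (gradient f)) (z w : E) :
    |f z - f w| ≤ (‖gradient f w‖ + K * ‖z - w‖) * ‖z - w‖ := by
  have hbound : ∀ p ∈ Metric.closedBall w ‖z - w‖,
      ‖fderiv ℝ f p‖ ≤ ‖gradient f w‖ + K * ‖z - w‖ := by
    intro p hp
    rw [Metric.mem_closedBall, dist_eq_norm] at hp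
    calc ‖fderiv ℝ f p‖ = ‖gradient f p‖ := ((InnerProductSpace.toDual ℝ E).symm.norm_map _).symm
      _ ≤ ‖gradient f w‖ + ‖gradient f p - gradient f w‖ := norm_le_insert' _ _
      _ ≤ ‖gradient f w‖ + K * ‖z - w‖ := by grw [hK.norm_sub_le, hp]
  simpa [dist_eq_norm] using (convex_closedBall w ‖z - w‖).norm_image_sub_le_of_norm_fderiv_le
    (fun p _ => hf p) hbound (Metric.mem_closedBall_self (norm_nonneg _))
    (by simp [dist_eq_norm])

theorem abs_sub_comp_add_smul_le (hf : Differentiable ℝ f) (hK : LipschitzWith K (gradient f))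
    (x : E) (μ : ℝ) (u : E) :
    |f (x + μ • u) - f x| ≤ (‖gradient f x‖ * |μ| + K * μ ^ 2 * ‖u‖) * ‖u‖ := by
  have := abs_sub_le_of_lipschitzWith_gradient hf hK (x + μ • u) x
  rw [add_sub_cancel_left, norm_smul, norm_eq_abs] at this
  convert this using 1
  rw [← sq_abs μ]
  ring

end LipschitzGradient

section GaussianAverage

variable {E F : Type*} [NormedAddCommGroup E] [InnerProductSpace ℝ E] [FiniteDimensional ℝ E]
  [MeasurableSpace E] [BorelSpace E] [NormedAddCommGroup F] [NormedSpace ℝ F] {K : ℝ≥0}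

theorem LipschitzWith.integrable_exp_smul_comp_add_smul {h : E → F} (hh : LipschitzWith K h)
    (x : E) (μ : ℝ) : Integrable fun u => exp (-‖u‖ ^ 2 / 2) • h (x + μ • u) := by
  refine integrable_of_norm_le_affine_mul_gaussian
    (by have := hh.continuous; fun_prop) ‖h x‖ (K * |μ|) 0 fun u => ?_
  rw [norm_smul, norm_of_nonneg (exp_pos _).le, pow_zero, mul_one, mul_comm]
  gcongr
  calc ‖h (x + μ • u)‖ ≤ ‖h x‖ + ‖h (x + μ • u) - h x‖ := norm_le_insert' _ _
    _ ≤ ‖h x‖ + K * |μ| * ‖u‖ := by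
      grw [hh.norm_sub_le]; simp [norm_smul, mul_assoc]

theorem LipschitzWith.norm_integral_exp_smul_comp_add_smul_sub_le {h : E → F}
    (hh : LipschitzWith K h) (μ : ℝ) (x y : E) :
    ‖(∫ u, exp (-‖u‖ ^ 2 / 2) • h (y + μ • u)) - ∫ u, exp (-‖u‖ ^ 2 / 2) • h (x + μ • u)‖
      ≤ (2 * π) ^ (Module.finrank ℝ E / 2 : ℝ) * (K * ‖y - x‖) := by
  rw [← integral_sub (hh.integrable_exp_smul_comp_add_smul y μ)
    (hh.integrable_exp_smul_comp_add_smul x μ), ← integral_exp_neg_sq_norm_div_two,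
    ← integral_mul_const]
  refine norm_integral_le_of_norm_le (integrable_exp_neg_sq_norm_div_two.mul_const _)
    (.of_forall fun u => ?_)
  rw [← smul_sub, norm_smul, norm_of_nonneg (exp_pos _).le]
  gcongr
  simpa using hh.norm_sub_le (y + μ • u) (x + μ • u)

end GaussianAverage

section GaussianSmoothing

variable {E : Type*} [NormedAddCommGroup E] [InnerProductSpace ℝ E] {f : E → ℝ}

theorem hasGradientAt_comp_add_smul [CompleteSpace E] (hf : Differentiable ℝ f)
    (x : E) (μ : ℝ) (u : E) :
    HasGradientAt (fun v => f (x + μ • v)) (μ • gradient f (x + μ • u)) u := by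
  rw [hasGradientAt_iff_hasFDerivAt]
  refine ((hf (x + μ • u)).hasFDerivAt.comp u
    (((hasFDerivAt_id u).const_smul μ).const_add x)).congr_fderiv ?_
  ext v
  simp [gradient]

variable [FiniteDimensional ℝ E] [MeasurableSpace E] [BorelSpace E] {K : ℝ≥0}

theorem integrable_sub_comp_add_smul_mul_exp (hf : Differentiable ℝ f)
    (hK : LipschitzWith K (gradient f)) (x : E) (μ : ℝ) :
    Integrable fun u => (f (x + μ • u) - f x) * exp (-‖u‖ ^ 2 / 2) := by
  refine integrable_of_norm_le_affine_mul_gaussian (by have := hf.continuous; fun_prop)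
    (‖gradient f x‖ * |μ|) (K * μ ^ 2) 1 fun u => ?_
  rw [norm_mul, norm_eq_abs, norm_of_nonneg (exp_pos _).le, pow_one]
  gcongr
  exact abs_sub_comp_add_smul_le hf hK x μ u

theorem integrable_sub_comp_add_smul_mul_exp_smul (hf : Differentiable ℝ f)
    (hK : LipschitzWith K (gradient f)) (x : E) (μ : ℝ) :
    Integrable fun u => ((f (x + μ • u) - f x) * exp (-‖u‖ ^ 2 / 2)) • u := by
  refine integrable_of_norm_le_affine_mul_gaussian (by have := hf.continuous; fun_prop)
    (‖gradient f x‖ * |μ|) (K * μ ^ 2) 2 fun u => ?_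
  rw [norm_smul, norm_mul, norm_eq_abs, norm_of_nonneg (exp_pos _).le]
  calc |f (x + μ • u) - f x| * exp (-‖u‖ ^ 2 / 2) * ‖u‖
      ≤ (‖gradient f x‖ * |μ| + K * μ ^ 2 * ‖u‖) * ‖u‖ * exp (-‖u‖ ^ 2 / 2) * ‖u‖ := by
        gcongr
        exact abs_sub_comp_add_smul_le hf hK x μ u
    _ = _ := by ring

theorem integral_sub_comp_add_smul_mul_exp_smul (hf : Differentiable ℝ f)
    (hK : LipschitzWith K (gradient f)) (x : E) (μ : ℝ) :
    ∫ u, ((f (x + μ • u) - f x) * exp (-‖u‖ ^ 2 / 2)) • u =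
      μ • ∫ u, exp (-‖u‖ ^ 2 / 2) • gradient f (x + μ • u) := by
  rw [← integral_smul]
  simp_rw [smul_comm μ]
  refine integral_mul_exp_neg_sq_norm_div_two_smul
    (fun u => (hasGradientAt_comp_add_smul hf x μ u).sub_const (f x))
    (integrable_sub_comp_add_smul_mul_exp_smul hf hK x μ) ?_
    (integrable_sub_comp_add_smul_mul_exp hf hK x μ)
  exact ((hK.integrable_exp_smul_comp_add_smul x μ).smul μ).congr
    (.of_forall fun u => smul_comm μ _ _)

end GaussianSmoothing

theorem kappa_eq_rpow_finrank (n : ℕ) :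
    kappa n = (2 * π) ^ (Module.finrank ℝ (EuclideanSpace ℝ (Fin n)) / 2 : ℝ) := by
  rw [kappa, finrank_euclideanSpace_fin]

theorem gsmoothGrad_eq_smul_integral_gradient {n : ℕ} {f : EuclideanSpace ℝ (Fin n) → ℝ}
    {K : ℝ≥0} (hf : Differentiable ℝ f) (hK : LipschitzWith K (gradient f)) {μ : ℝ} (hμ : μ ≠ 0)
    (x : EuclideanSpace ℝ (Fin n)) :
    gsmoothGrad f μ x = (kappa n)⁻¹ • ∫ u, exp (-‖u‖ ^ 2 / 2) • gradient f (x + μ • u) := by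
  have hdiv : ∀ u : EuclideanSpace ℝ (Fin n),
      (((f (x + μ • u) - f x) / μ) * exp (-‖u‖ ^ 2 / 2)) • u
        = μ⁻¹ • (((f (x + μ • u) - f x) * exp (-‖u‖ ^ 2 / 2)) • u) := fun u => by
    rw [smul_smul, div_eq_inv_mul, mul_assoc]
  rw [gsmoothGrad, funext hdiv, integral_smul, integral_sub_comp_add_smul_mul_exp_smul hf hK,
    smul_smul μ⁻¹, inv_mul_cancel₀ hμ, one_smul]

theorem smoothed_gradient_lipschitz_of_lipschitz_gradient_general {n : ℕ}
    (f : EuclideanSpace ℝ (Fin n) → ℝ) (L1 : ℝ) (hL : 0 ≤ L1)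
    (hdiff : Differentiable ℝ f)
    (hLip : ∀ x y : EuclideanSpace ℝ (Fin n),
      ‖gradient f y - gradient f x‖ ≤ L1 * ‖y - x‖)
    (μ : ℝ) (hμ : 0 < μ) (x y : EuclideanSpace ℝ (Fin n)) :
    ‖gsmoothGrad f μ y - gsmoothGrad f μ x‖ ≤ L1 * ‖y - x‖ := by
  have hK : LipschitzWith ⟨L1, hL⟩ (gradient f) :=
    .of_dist_le_mul fun a b => by rw [dist_eq_norm, dist_eq_norm]; exact hLip b a
  have hκ : 0 < kappa n := by unfold kappa; positivity
  rw [gsmoothGrad_eq_smul_integral_gradient hdiff hK hμ.ne',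
    gsmoothGrad_eq_smul_integral_gradient hdiff hK hμ.ne', ← smul_sub, norm_smul, norm_inv,
    norm_of_nonneg hκ.le]
  calc (kappa n)⁻¹ * ‖(∫ u, exp (-‖u‖ ^ 2 / 2) • gradient f (y + μ • u))
        - ∫ u, exp (-‖u‖ ^ 2 / 2) • gradient f (x + μ • u)‖
      ≤ (kappa n)⁻¹ * (kappa n * (L1 * ‖y - x‖)) := by
        gcongr
        rw [kappa_eq_rpow_finrank]
        exact hK.norm_integral_exp_smul_comp_add_smul_sub_le μ x y
    _ = L1 * ‖y - x‖ := by field_simp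

/-- If `∇f` is `L₁`-Lipschitz then so is the gradient of the Gaussian smoothing:
`‖∇f_μ(y) − ∇f_μ(x)‖ ≤ L₁ ‖y − x‖`. -/
theorem smoothed_gradient_lipschitz_of_lipschitz_gradient {n : ℕ} (hn : 1 ≤ n)
    (f : EuclideanSpace ℝ (Fin n) → ℝ) (L1 : ℝ) (hL : 0 ≤ L1)
    (hdiff : Differentiable ℝ f)
    (hLip : ∀ x y : EuclideanSpace ℝ (Fin n),
      ‖gradient f y - gradient f x‖ ≤ L1 * ‖y - x‖)
    (μ : ℝ) (hμ : 0 < μ) (x y : EuclideanSpace ℝ (Fin n)) :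
    ‖gsmoothGrad f μ y - gsmoothGrad f μ x‖ ≤ L1 * ‖y - x‖ :=
  smoothed_gradient_lipschitz_of_lipschitz_gradient_general f L1 hL hdiff hLip μ hμ x y
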